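/- arXiv:2411.05612 — 7 statements merged into one kernel-verified Lean document; each statement's English description precedes it below -/
import Mathlib

section
/- The linear Green-Sanders example GS(p,n) has VC-dimension at most 3, for all primes p > 2 and all n. -/
/-!
Let the points `x₀, …, x_{k-1}` be shattered, and let `i₀` be the first coordinate at which
they do not all agree. A translate `t` whose trace on the points is neither empty nor everything
must kill the common prefix before `i₀`, so membership of `xₘ + t` is decided at `i₀`: it holds
when `xₘ i₀ = v + 1` and fails unless `xₘ i₀ ∈ {v, v + 1}`, where `v = -t i₀`. Every nontrivial
trace is thus squeezed between two consecutive level sets of `m ↦ xₘ i₀`. Playing the traces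
`{u}` and `{u, z}` against each other shows that this map is injective, and the trace of all
points but one then forces `k - 1 ≤ 2`.
-/

/-- The linear Green–Sanders example in `F_p^n`. -/
def GS (p n : ℕ) [NeZero p] : Set (Fin n → ZMod p) :=
  {x | ∃ i : Fin n, (∀ j < i, x j = 0) ∧ x i = 1}

/-- `A` has VC-dimension at least `k` (translate sense). -/
def VCge {G : Type*} [AddCommGroup G] (A : Set G) (k : ℕ) : Prop :=
  ∃ x : Fin k → G, ∃ y : Finset (Fin k) → G,
    ∀ (S : Finset (Fin k)) (i : Fin k), x i + y S ∈ A ↔ i ∈ S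

open Finset Function

theorem injective_of_shatters {G ι : Type*} [AddCommGroup G] [DecidableEq ι] {A : Set G}
    {x : ι → G} {y : Finset ι → G} (hxy : ∀ S i, x i + y S ∈ A ↔ i ∈ S) : Injective x := by
  intro i j hij
  have hj : x j + y {i} ∈ A := hij ▸ (hxy {i} i).2 (mem_singleton_self i)
  exact (mem_singleton.1 ((hxy {i} j).1 hj)).symm

theorem exists_first_disagreement {ι κ R : Type*} [LinearOrder κ] [WellFoundedLT κ]
    {a : ι → κ → R} (ha : ∃ m m', a m ≠ a m') :
    ∃ i₀, (∃ m m', a m i₀ ≠ a m' i₀) ∧ ∀ j < i₀, ∀ m m', a m j = a m' j := by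
  obtain ⟨m, m', hne⟩ := ha
  obtain ⟨i, hi⟩ := ne_iff.1 hne
  obtain ⟨i₀, hi₀, hmin⟩ := wellFounded_lt.has_min {i | ∃ m m', a m i ≠ a m' i} ⟨i, m, m', hi⟩
  refine ⟨i₀, hi₀, fun j hj m m' => ?_⟩
  by_contra hne
  exact hmin j ⟨m, m', hne⟩ hj

section LevelCut

variable {ι R : Type*} [Add R] [One R] {b : ι → R}

def IsLevelCut (b : ι → R) (T : Set ι) : Prop :=
  ∃ v, b ⁻¹' {v + 1} ⊆ T ∧ T ⊆ b ⁻¹' {v, v + 1}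

theorem IsLevelCut.exists_apply_eq_of_mem_of_notMem {T : Set ι} (hT : IsLevelCut b T) {u w : ι}
    (hu : u ∈ T) (hw : w ∉ T) (huw : b u = b w) :
    ∃ v, b ⁻¹' {v + 1} ⊆ T ∧ T ⊆ b ⁻¹' {v, v + 1} ∧ b u = v := by
  obtain ⟨v, hsub, hsup⟩ := hT
  refine ⟨v, hsub, hsup, ?_⟩
  rcases hsup hu with h | h
  · exact h
  · exact absurd (hsub (show b w = v + 1 from huw ▸ h)) hw

theorem injective_of_isLevelCut (hb : ∃ m m', b m ≠ b m')
    (h : ∀ T : Set ι, T.Nonempty → T ≠ Set.univ → IsLevelCut b T) : Injective b := by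
  intro u w huw
  by_contra hne
  obtain ⟨z, hz⟩ : ∃ z, b z ≠ b u := by
    obtain ⟨m, m', hmm'⟩ := hb
    by_cases hm : b m = b u
    · exact ⟨m', fun h => hmm' (hm.trans h.symm)⟩
    · exact ⟨m, hm⟩
  have hwz : w ≠ z := fun h => hz (h ▸ huw.symm)
  have hw₁ : w ∉ ({u} : Set ι) := Ne.symm hne
  have hw₂ : w ∉ ({u, z} : Set ι) := by simp [Ne.symm hne, hwz]
  obtain ⟨v₁, hsub₁, -, hv₁⟩ := (h {u} (Set.singleton_nonempty u)
    ((Set.ne_univ_iff_exists_notMem _).2 ⟨w, hw₁⟩)).exists_apply_eq_of_mem_of_notMem rfl hw₁ huw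
  obtain ⟨v₂, -, hsup₂, hv₂⟩ := (h {u, z} (Set.insert_nonempty u {z})
    ((Set.ne_univ_iff_exists_notMem _).2 ⟨w, hw₂⟩)).exists_apply_eq_of_mem_of_notMem (by simp) hw₂ huw
  rcases hsup₂ (show z ∈ ({u, z} : Set ι) by simp) with h | h
  · exact hz (h.trans hv₂.symm)
  · have hzu : z = u := hsub₁ (show b z = v₁ + 1 by rw [h, ← hv₂, hv₁])
    exact hz (congrArg b hzu)

theorem card_le_three_of_isLevelCut [Fintype ι] (hb : ∃ m m', b m ≠ b m')
    (h : ∀ T : Set ι, T.Nonempty → T ≠ Set.univ → IsLevelCut b T) : Fintype.card ι ≤ 3 := by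
  classical
  have hinj := injective_of_isLevelCut hb h
  obtain ⟨w, w', hww'⟩ := hb
  have hw' : w' ∈ ({w}ᶜ : Set ι) := fun h => hww' (congrArg b h).symm
  obtain ⟨v, -, hsup⟩ := h {w}ᶜ ⟨w', hw'⟩ ((Set.ne_univ_iff_exists_notMem _).2 ⟨w, by simp⟩)
  have hcard : (univ.erase w).card ≤ ({v, v + 1} : Finset R).card :=
    card_le_card_of_injOn b (fun m hm => by simpa using hsup (ne_of_mem_erase hm)) hinj.injOn
  rw [card_erase_of_mem (mem_univ w), card_univ] at hcard
  have := card_le_two (a := v) (b := v + 1)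
  omega

end LevelCut

section GreenSanders

variable {p n : ℕ} [NeZero p]

theorem eq_zero_of_mem_GS_of_notMem_GS {x x' : Fin n → ZMod p} {i₀ : Fin n}
    (hagree : ∀ j < i₀, x' j = x j) (hx : x ∈ GS p n) (hx' : x' ∉ GS p n) :
    ∀ j < i₀, x j = 0 := by
  obtain ⟨i, h0, h1⟩ := hx
  have hi : i₀ ≤ i := by
    by_contra! hlt
    exact hx' ⟨i, fun j hj => (hagree j (hj.trans hlt)).trans (h0 j hj), (hagree i hlt).trans h1⟩
  exact fun j hj => h0 j (hj.trans_le hi)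

theorem apply_eq_zero_or_one_of_mem_GS {x : Fin n → ZMod p} {i₀ : Fin n}
    (h0 : ∀ j < i₀, x j = 0) (hx : x ∈ GS p n) : x i₀ = 0 ∨ x i₀ = 1 := by
  obtain ⟨i, hi0, hi1⟩ := hx
  rcases lt_trichotomy i i₀ with hlt | rfl | hgt
  · exact Or.inl (eq_zero_of_zero_eq_one ((h0 i hlt).symm.trans hi1) _)
  · exact Or.inr hi1
  · exact Or.inl (hi0 i₀ hgt)

theorem isLevelCut_GS_trace {ι : Type*} {a : ι → Fin n → ZMod p} {i₀ : Fin n}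
    (hagree : ∀ j < i₀, ∀ m m', a m j = a m' j) (t : Fin n → ZMod p)
    (hne : {m | a m + t ∈ GS p n}.Nonempty) (hne' : {m | a m + t ∈ GS p n} ≠ Set.univ) :
    IsLevelCut (fun m => a m i₀) {m | a m + t ∈ GS p n} := by
  obtain ⟨mp, hmp⟩ := hne
  obtain ⟨mm, hmm⟩ := (Set.ne_univ_iff_exists_notMem _).1 hne'
  have hprefix : ∀ m, ∀ j < i₀, (a m + t) j = 0 := by
    intro m j hj
    have hmp0 := eq_zero_of_mem_GS_of_notMem_GS (x := a mp + t) (x' := a mm + t)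
      (fun j hj => by simp [hagree j hj mm mp]) hmp hmm j hj
    simpa [hagree j hj m mp] using hmp0
  refine ⟨-t i₀, fun m hm => ⟨i₀, hprefix m, ?_⟩, fun m hm => ?_⟩
  · have hm : a m i₀ = -t i₀ + 1 := hm
    simp only [Pi.add_apply]
    linear_combination hm
  · show a m i₀ = -t i₀ ∨ a m i₀ = -t i₀ + 1
    rcases apply_eq_zero_or_one_of_mem_GS (hprefix m) hm with h | h
    · exact Or.inl (by simp only [Pi.add_apply] at h; linear_combination h)
    · exact Or.inr (by simp only [Pi.add_apply] at h; linear_combination h)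

end GreenSanders

theorem gs_vc_le_three_general (p n : ℕ) [NeZero p] :
    ∀ k : ℕ, VCge (GS p n) k → k ≤ 3 := by
  classical
  rintro k ⟨x, y, hxy⟩
  by_contra! hk
  have hx : Injective x := injective_of_shatters hxy
  obtain ⟨i₀, hb, hagree⟩ := exists_first_disagreement (a := x)
    ⟨⟨0, by omega⟩, ⟨1, by omega⟩, hx.ne (by simp [Fin.ext_iff])⟩
  have htrace (T : Set (Fin k)) : {m | x m + y T.toFinset ∈ GS p n} = T :=
    Set.ext fun m => by simpa using hxy T.toFinset m
  have hcut (T : Set (Fin k)) (hT : T.Nonempty) (hT' : T ≠ Set.univ) :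
      IsLevelCut (fun m => x m i₀) T := by
    rw [← htrace T] at hT hT' ⊢
    exact isLevelCut_GS_trace hagree _ hT hT'
  have := card_le_three_of_isLevelCut hb hcut
  simp only [Fintype.card_fin] at this
  omega

theorem gs_vc_le_three (p n : ℕ) (hp : p.Prime) (hp2 : 2 < p) (hn : 0 < n)
    [NeZero p] :
    ∀ k : ℕ, VCge (GS p n) k → k ≤ 3 :=
  gs_vc_le_three_general p n
end

section
/- The set GS(3,n) (for n ≥ 3) shatters the set S = {(0,0,0,...), (0,1,-1,0,...), (0,-1,1,0,...)}: for every subset T of S there exists y ∈ F_3^n such that for all s ∈ S, s + y ∈ GS(3,n) if and only if s ∈ T. Hence GS(3,n) has VC-dimension at least 3. -/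
/-- The vector `(0, 1, -1, 0, ..., 0)` in `F_3^n`. -/
def v (n : ℕ) : Fin n → ZMod 3 :=
  fun j => if (j : ℕ) = 1 then 1 else if (j : ℕ) = 2 then -1 else 0

def ShattersByTranslates {G ι : Type*} [AddCommGroup G] (A : Set G) (x : ι → G) : Prop :=
  ∀ S : Finset ι, ∃ y, ∀ i, x i + y ∈ A ↔ i ∈ S

namespace ShattersByTranslates

variable {G H ι : Type*} [AddCommGroup G] [AddCommGroup H] {A : Set G} {x : ι → G}

theorem map (f : G →+ H) {B : Set H} (h : ShattersByTranslates (f ⁻¹' B) x) :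
    ShattersByTranslates B (f ∘ x) := fun S => by
  obtain ⟨y, hy⟩ := h S
  exact ⟨f y, fun i => by simpa using hy i⟩

theorem vcge {k : ℕ} {x : Fin k → G} (h : ShattersByTranslates A x) : VCge A k := by
  choose y hy using h
  exact ⟨x, y, fun S i => hy S i⟩

theorem exists_add_mem_iff_mem [Fintype ι] (h : ShattersByTranslates A x) (T : Set G) :
    ∃ y, ∀ i, x i + y ∈ A ↔ x i ∈ T := by
  classical
  obtain ⟨y, hy⟩ := h {i | x i ∈ T}
  exact ⟨y, fun i => by simpa using hy i⟩

end ShattersByTranslates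

def padZero (M : Type*) [AddZeroClass M] (m k : ℕ) : (Fin m → M) →+ (Fin (m + k) → M) where
  toFun x := Fin.append x 0
  map_zero' := by
    ext j
    refine Fin.addCases (fun i => ?_) (fun i => ?_) j <;> simp
  map_add' x y := by
    ext j
    refine Fin.addCases (fun i => ?_) (fun i => ?_) j <;> simp

@[simp]
theorem padZero_apply_castAdd {M : Type*} [AddZeroClass M] {m k : ℕ} (x : Fin m → M) (i : Fin m) :
    padZero M m k x (Fin.castAdd k i) = x i := Fin.append_left _ _ _

@[simp]
theorem padZero_apply_natAdd {M : Type*} [AddZeroClass M] {m k : ℕ} (x : Fin m → M) (i : Fin k) :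
    padZero M m k x (Fin.natAdd m i) = 0 := Fin.append_right _ _ _

theorem preimage_padZero_GS (p : ℕ) [Fact (1 < p)] (m k : ℕ) :
    padZero (ZMod p) m k ⁻¹' GS p (m + k) = GS p m := by
  ext x
  constructor
  · rintro ⟨i, hlt, hi⟩
    induction i using Fin.addCases with
    | left i =>
      refine ⟨i, fun j hj => ?_, by simpa using hi⟩
      simpa using hlt (Fin.castAdd k j) hj
    | right i => simp at hi
  · rintro ⟨i, hlt, hi⟩
    refine ⟨Fin.castAdd k i, fun j hj => ?_, by simpa using hi⟩
    induction j using Fin.addCases with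
    | left j => simpa using hlt j hj
    | right j =>
      have hji := Fin.lt_def.mp hj
      simp only [Fin.val_natAdd, Fin.val_castAdd] at hji
      omega

theorem padZero_v (m : ℕ) : padZero (ZMod 3) 3 m ![0, 1, -1] = v (3 + m) := by
  ext j
  induction j using Fin.addCases with
  | left i => fin_cases i <;> simp [v]
  | right i =>
    have h1 : 3 + (i : ℕ) ≠ 1 := by omega
    have h2 : 3 + (i : ℕ) ≠ 2 := by omega
    simp [v, h1, h2]

instance (p n : ℕ) [NeZero p] : DecidablePred (· ∈ GS p n) := fun _ => by
  unfold GS; infer_instance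

theorem shattersByTranslates_GS_three :
    ShattersByTranslates (GS 3 3) ![0, ![0, 1, -1], -![0, 1, -1]] := by
  unfold ShattersByTranslates; decide

theorem gs3_shatters (n : ℕ) (hn : 3 ≤ n) :
    (∀ T ⊆ ({0, v n, -v n} : Set (Fin n → ZMod 3)),
      ∃ y : Fin n → ZMod 3, ∀ s ∈ ({0, v n, -v n} : Set (Fin n → ZMod 3)),
        (s + y ∈ GS 3 n ↔ s ∈ T)) ∧
    VCge (GS 3 n) 3 := by
  obtain ⟨m, rfl⟩ := Nat.exists_eq_add_of_le hn
  have h : ShattersByTranslates (GS 3 (3 + m)) ![0, v (3 + m), -v (3 + m)] := by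
    have h3 := shattersByTranslates_GS_three
    rw [← preimage_padZero_GS 3 3 m] at h3
    rw [← padZero_v]
    convert h3.map (padZero _ 3 m) using 1
    ext i : 1
    fin_cases i <;> simp [-Matrix.neg_cons]
  refine ⟨fun T _ => ?_, h.vcge⟩
  obtain ⟨y, hy⟩ := h.exists_add_mem_iff_mem T
  refine ⟨y, ?_⟩
  simpa [Fin.forall_fin_succ] using hy
end

section
/- For any r ≥ 2, the r-colour bipartite Ramsey number br(r; 3, 3) is at most 4r^3 + 1: every r-colouring of the edges of the complete bipartite graph K_{n,n} with n = 4r^3 + 1 contains a monochromatic copy of K_{3,3}. -/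
/-!
Count pairs (triple of rows `(i₁, i₂, i₃)`, column `j`) such that the three rows have the same
colour at `j`. For a fixed column this number is `∑_c d_c(j) ^ 3`, where `d_c(j)` is the number
of rows of colour `c` at `j`, hence at least `n ^ 3 / r ^ 2` by the power mean inequality.
For a fixed triple of distinct rows, the absence of a monochromatic `K_{3,3}` leaves at most two
columns per colour, so at most `2r`; the at most `3n ^ 2` degenerate triples contribute at most
`n` each. Thus `n ^ 4 ≤ r ^ 2 (2r n ^ 3 + 3 n ^ 3)`, i.e. `n ≤ 2r ^ 3 + 3r ^ 2 < 4r ^ 3 + 1`.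
-/

open Finset

section

variable {X Y C : Type*}

def HasMonochromaticK33 (χ : X → Y → C) : Prop :=
  ∃ c : C, ∃ (S : Finset X) (T : Finset Y), #S = 3 ∧ #T = 3 ∧ ∀ i ∈ S, ∀ j ∈ T, χ i j = c

variable [Fintype Y] [DecidableEq C]

def commonColourColumns (χ : X → Y → C) (t : X × X × X) : Finset Y :=
  {j | χ t.1 j = χ t.2.1 j ∧ χ t.1 j = χ t.2.2 j}

variable {χ : X → Y → C}

lemma card_filter_monochromatic_le_two (h : ¬ HasMonochromaticK33 χ) {i₁ i₂ i₃ : X}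
    (h₁₂ : i₁ ≠ i₂) (h₁₃ : i₁ ≠ i₃) (h₂₃ : i₂ ≠ i₃) (c : C) :
    #{j | χ i₁ j = c ∧ χ i₂ j = c ∧ χ i₃ j = c} ≤ 2 := by
  classical
  by_contra! hbig
  obtain ⟨T, hT, hTcard⟩ := exists_subset_card_eq hbig
  refine h ⟨c, {i₁, i₂, i₃}, T, card_eq_three.2 ⟨i₁, i₂, i₃, h₁₂, h₁₃, h₂₃, rfl⟩, hTcard, ?_⟩
  intro i hi j hj
  have hj := (mem_filter.1 (hT hj)).2
  simp only [mem_insert, mem_singleton] at hi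
  rcases hi with rfl | rfl | rfl <;> tauto

variable [Fintype C]

lemma card_commonColourColumns_le (h : ¬ HasMonochromaticK33 χ)
    {t : X × X × X} (h₁₂ : t.1 ≠ t.2.1) (h₁₃ : t.1 ≠ t.2.2) (h₂₃ : t.2.1 ≠ t.2.2) :
    #(commonColourColumns χ t) ≤ 2 * Fintype.card C := by
  rw [card_eq_sum_card_fiberwise (f := fun j ↦ χ t.1 j) (t := univ) fun _ _ ↦ mem_univ _]
  calc ∑ c, #{j ∈ commonColourColumns χ t | χ t.1 j = c}
      ≤ ∑ c : C, #{j | χ t.1 j = c ∧ χ t.2.1 j = c ∧ χ t.2.2 j = c} := by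
        refine sum_le_sum fun c _ ↦ card_le_card fun j ↦ ?_
        simp only [commonColourColumns, mem_filter, mem_univ, true_and]
        grind
    _ ≤ ∑ _c : C, 2 := sum_le_sum fun c _ ↦ card_filter_monochromatic_le_two h h₁₂ h₁₃ h₂₃ c
    _ = 2 * Fintype.card C := by rw [sum_const, card_univ, smul_eq_mul, mul_comm]

variable [Fintype X]

lemma sum_card_commonColourColumns :
    ∑ t, #(commonColourColumns χ t) = ∑ j, ∑ c, #{i | χ i j = c} ^ 3 := by
  refine (sum_card_bipartiteAbove_eq_sum_card_bipartiteBelow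
    (fun (t : X × X × X) j ↦ χ t.1 j = χ t.2.1 j ∧ χ t.1 j = χ t.2.2 j)).trans
    (sum_congr rfl fun j _ ↦ ?_)
  rw [bipartiteBelow, card_eq_sum_card_fiberwise (f := fun t ↦ χ t.1 j) (t := univ)
    fun _ _ ↦ mem_univ _]
  refine sum_congr rfl fun c _ ↦ ?_
  set S : Finset X := {i | χ i j = c}
  have hcube : ({t ∈ {t | χ t.1 j = χ t.2.1 j ∧ χ t.1 j = χ t.2.2 j} | χ t.1 j = c} :
      Finset (X × X × X)) = S ×ˢ S ×ˢ S := by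
    ext t
    simp only [S, mem_filter, mem_univ, true_and, mem_product]
    grind
  rw [hcube, card_product, card_product]
  ring

lemma card_filter_not_injective_le [DecidableEq X] :
    #{t : X × X × X | t.1 = t.2.1 ∨ t.1 = t.2.2 ∨ t.2.1 = t.2.2} ≤ 3 * Fintype.card X ^ 2 := by
  have hdiag (p : X × X × X → Prop) [DecidablePred p] (f : X × X → X × X × X)
      (hf : ∀ t, p t → ∃ u, f u = t) : #{t | p t} ≤ Fintype.card X ^ 2 := by
    rw [sq, ← Fintype.card_prod]
    refine card_le_card_of_surjOn f fun t ht ↦ ?_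
    obtain ⟨u, hu⟩ := hf t (mem_filter.1 ht).2
    exact ⟨u, mem_univ u, hu⟩
  rw [filter_or, filter_or]
  calc _ ≤ #{t : X × X × X | t.1 = t.2.1} + (#{t : X × X × X | t.1 = t.2.2}
          + #{t : X × X × X | t.2.1 = t.2.2}) :=
        (card_union_le _ _).trans (by gcongr; exact card_union_le _ _)
    _ ≤ Fintype.card X ^ 2 + (Fintype.card X ^ 2 + Fintype.card X ^ 2) := by
        gcongr
        · exact hdiag _ (fun u ↦ (u.1, u.1, u.2)) fun ⟨a, b, c⟩ h ↦ ⟨(a, c), by simp_all⟩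
        · exact hdiag _ (fun u ↦ (u.1, u.2, u.1)) fun ⟨a, b, c⟩ h ↦ ⟨(a, b), by simp_all⟩
        · exact hdiag _ (fun u ↦ (u.2, u.1, u.1)) fun ⟨a, b, c⟩ h ↦ ⟨(b, a), by simp_all⟩
    _ = 3 * Fintype.card X ^ 2 := by ring

lemma sum_card_commonColourColumns_le [DecidableEq X] (h : ¬ HasMonochromaticK33 χ) :
    ∑ t, #(commonColourColumns χ t) ≤
      2 * Fintype.card C * Fintype.card X ^ 3 + 3 * Fintype.card X ^ 2 * Fintype.card Y := by
  set D : Finset (X × X × X) := {t | t.1 = t.2.1 ∨ t.1 = t.2.2 ∨ t.2.1 = t.2.2}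
  rw [← sum_filter_not_add_sum_filter univ (· ∈ D)]
  gcongr ?_ + ?_
  · calc ∑ t ∈ univ with t ∉ D, #(commonColourColumns χ t)
        ≤ #{t ∈ univ | t ∉ D} * (2 * Fintype.card C) := by
          refine sum_le_card_nsmul _ _ _ fun t ht ↦ ?_
          simp only [D, mem_filter, mem_univ, true_and, not_or] at ht
          exact card_commonColourColumns_le h ht.1 ht.2.1 ht.2.2
      _ ≤ 2 * Fintype.card C * Fintype.card X ^ 3 := by
          rw [mul_comm]
          gcongr
          exact (card_le_univ _).trans_eq (by simp [Fintype.card_prod, pow_three])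
  · calc ∑ t ∈ univ with t ∈ D, #(commonColourColumns χ t)
        ≤ #{t ∈ univ | t ∈ D} * Fintype.card Y :=
          sum_le_card_nsmul _ _ _ fun t _ ↦ card_le_univ _
      _ ≤ 3 * Fintype.card X ^ 2 * Fintype.card Y := by
          gcongr
          simpa only [filter_mem_eq_inter, univ_inter] using card_filter_not_injective_le

lemma card_pow_three_mul_card_le_sum_card_fiber_pow_three :
    Fintype.card X ^ 3 * Fintype.card Y ≤ Fintype.card C ^ 2 * ∑ j, ∑ c, #{i | χ i j = c} ^ 3 := by
  rw [mul_sum, mul_comm, ← smul_eq_mul, ← card_univ, ← sum_const]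
  refine sum_le_sum fun j _ ↦ ?_
  have hX : Fintype.card X = ∑ c, #{i | χ i j = c} :=
    card_eq_sum_card_fiberwise (f := fun i ↦ χ i j) fun _ _ ↦ mem_univ _
  rw [hX, ← card_univ (α := C)]
  exact pow_sum_le_card_mul_sum_pow (fun _ _ ↦ Nat.zero_le _) 2

end

theorem card_mul_card_le_of_not_hasMonochromaticK33 {X Y C : Type*} [Fintype X] [Fintype Y]
    [Fintype C] {χ : X → Y → C} (h : ¬ HasMonochromaticK33 χ) :
    Fintype.card X * Fintype.card Y ≤
      Fintype.card C ^ 2 * (2 * Fintype.card C * Fintype.card X + 3 * Fintype.card Y) := by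
  classical
  set n := Fintype.card X
  set m := Fintype.card Y
  set r := Fintype.card C
  rcases Nat.eq_zero_or_pos n with hn | hn
  · simp [hn]
  refine Nat.le_of_mul_le_mul_left ?_ (pow_pos hn 2)
  calc n ^ 2 * (n * m) = n ^ 3 * m := by ring
    _ ≤ r ^ 2 * ∑ j, ∑ c, #{i | χ i j = c} ^ 3 :=
        card_pow_three_mul_card_le_sum_card_fiber_pow_three
    _ = r ^ 2 * ∑ t, #(commonColourColumns χ t) := by rw [sum_card_commonColourColumns]
    _ ≤ r ^ 2 * (2 * r * n ^ 3 + 3 * n ^ 2 * m) := by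
        gcongr; exact sum_card_commonColourColumns_le h
    _ = n ^ 2 * (r ^ 2 * (2 * r * n + 3 * m)) := by ring

theorem bipartite_ramsey_333 (r : ℕ) (hr : 2 ≤ r) :
    ∀ χ : Fin (4 * r ^ 3 + 1) → Fin (4 * r ^ 3 + 1) → Fin r,
      ∃ c : Fin r, ∃ S T : Finset (Fin (4 * r ^ 3 + 1)),
        S.card = 3 ∧ T.card = 3 ∧ ∀ i ∈ S, ∀ j ∈ T, χ i j = c := by
  intro χ
  by_contra h
  have hbound := card_mul_card_le_of_not_hasMonochromaticK33 h
  simp only [Fintype.card_fin] at hbound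
  have hn : 4 * r ^ 3 + 1 ≤ r ^ 2 * (2 * r + 3) :=
    Nat.le_of_mul_le_mul_right (hbound.trans_eq (by ring)) (Nat.succ_pos _)
  nlinarith [Nat.mul_le_mul_left (r ^ 2) hr]
end

section
/- Let G be a bipartite graph with parts of sizes m and n and edge density ρ ∈ (0,1]. If m > (q−1)/ρ and n > (s−1)·C(m,q)/C(ρm,q) (where C denotes the generalized binomial coefficient), then G contains a copy of the complete bipartite graph K_{q,s}. -/
/-- Generalized binomial coefficient `C(x, q) = x(x-1)⋯(x-q+1)/q!` for real `x`. -/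
noncomputable def genChoose (x : ℝ) (q : ℕ) : ℝ :=
  (∏ i ∈ Finset.range q, (x - i)) / (Nat.factorial q)

/-!
Count the pairs `(Q, j)` where `Q` is a `q`-set of left vertices all adjacent to the right
vertex `j`. If there is no `K_{q,s}`, each `Q` occurs at most `s - 1` times, so
`∑ⱼ C(dⱼ, q) ≤ (s - 1) C(m, q)`. On the other hand `x ↦ ∏_{i<q} max (x - i) 0` is convex and
interpolates `d ↦ q! C(d, q)`, so by Jensen's inequality `∑ⱼ C(dⱼ, q) ≥ n C(ρm, q)`, the degrees
`dⱼ` having mean `ρm > q - 1`. The two bounds contradict the hypothesis on `n`.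
-/

open Finset
open scoped Nat

theorem ConvexOn.card_mul_map_le_sum {ι E : Type*} [AddCommGroup E] [Module ℝ E]
    {s : Set E} {f : E → ℝ} (hf : ConvexOn ℝ s f) {t : Finset ι} {p : ι → E} {μ : E}
    (hp : ∀ i ∈ t, p i ∈ s) (hμ : ∑ i ∈ t, p i = #t • μ) :
    #t * f μ ≤ ∑ i ∈ t, f (p i) := by
  rcases t.eq_empty_or_nonempty with rfl | ht
  · simp
  have hcard : (#t : ℝ) ≠ 0 := by exact_mod_cast ht.card_ne_zero
  have hmean : ∑ i ∈ t, (#t : ℝ)⁻¹ • p i = μ := by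
    rw [← smul_sum, hμ, ← Nat.cast_smul_eq_nsmul ℝ, smul_smul, inv_mul_cancel₀ hcard, one_smul]
  have hjensen := hf.map_sum_le (w := fun _ => (#t : ℝ)⁻¹) (fun _ _ => by positivity)
    (by rw [sum_const, nsmul_eq_mul, mul_inv_cancel₀ hcard]) hp
  rw [hmean, ← smul_sum, smul_eq_mul] at hjensen
  rwa [le_inv_mul_iff₀ (by positivity)] at hjensen

noncomputable def truncDescFactorial (q : ℕ) (x : ℝ) : ℝ :=
  ∏ i ∈ range q, max (x - i) 0

lemma truncDescFactorial_nonneg (q : ℕ) (x : ℝ) : 0 ≤ truncDescFactorial q x :=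
  prod_nonneg fun _ _ => le_max_right _ _

lemma monotone_truncDescFactorial (q : ℕ) : Monotone (truncDescFactorial q) := by
  unfold truncDescFactorial
  induction q with
  | zero => simp only [prod_range_zero]; exact monotone_const
  | succ k ih =>
    simp only [prod_range_succ]
    exact ih.mul (fun a b hab => max_le_max (by linarith) le_rfl)
      (truncDescFactorial_nonneg k) (fun _ => le_max_right _ _)

lemma convexOn_truncDescFactorial (q : ℕ) : ConvexOn ℝ Set.univ (truncDescFactorial q) := by
  unfold truncDescFactorial
  induction q with
  | zero => simp only [prod_range_zero]; exact convexOn_const 1 convex_univ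
  | succ k ih =>
    have hfactor : ConvexOn ℝ Set.univ fun x : ℝ => max (x - k) 0 :=
      ((convexOn_id convex_univ).sub (concaveOn_const _ convex_univ)).sup
        (convexOn_const 0 convex_univ)
    simp only [prod_range_succ]
    exact ih.mul hfactor (fun x _ => truncDescFactorial_nonneg k x)
      (fun _ _ => le_max_right _ _)
      (((monotone_truncDescFactorial k).monovary
        fun a b hab => max_le_max (by linarith) le_rfl).monovaryOn _)

lemma truncDescFactorial_natCast (q d : ℕ) : truncDescFactorial q d = d.descFactorial q := by
  rw [truncDescFactorial, Nat.descFactorial_eq_prod_range, Nat.cast_prod]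
  refine prod_congr rfl fun i _ => ?_
  rcases le_or_gt i d with h | h
  · rw [Nat.cast_sub h, max_eq_left (sub_nonneg.2 (Nat.cast_le.2 h))]
  · rw [Nat.sub_eq_zero_of_le h.le, max_eq_right (sub_nonpos.2 (Nat.cast_le.2 h.le)),
      Nat.cast_zero]

lemma truncDescFactorial_eq_factorial_mul_genChoose {q : ℕ} {x : ℝ} (hx : (q : ℝ) - 1 < x) :
    truncDescFactorial q x = q ! * genChoose x q := by
  rw [genChoose, mul_div_cancel₀ _ (by positivity), truncDescFactorial]
  refine prod_congr rfl fun i hi => max_eq_left ?_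
  have : (i : ℝ) + 1 ≤ q := by exact_mod_cast mem_range.1 hi
  linarith

lemma genChoose_natCast (m q : ℕ) : genChoose m q = m.choose q := by
  rw [genChoose, ← descPochhammer_eval_eq_prod_range, descPochhammer_eval_eq_descFactorial,
    Nat.descFactorial_eq_factorial_mul_choose, Nat.cast_mul, mul_div_cancel_left₀ _ (by positivity)]

lemma genChoose_pos {q : ℕ} {x : ℝ} (hx : (q : ℝ) - 1 < x) : 0 < genChoose x q := by
  refine div_pos (prod_pos fun i hi => ?_) (by positivity)
  have : (i : ℝ) + 1 ≤ q := by exact_mod_cast mem_range.1 hi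
  linarith

theorem card_mul_genChoose_le_sum_choose {ι : Type*} {t : Finset ι} {d : ι → ℕ} {q : ℕ}
    {μ : ℝ} (hμ : ∑ i ∈ t, (d i : ℝ) = #t * μ) (hq : (q : ℝ) - 1 < μ) :
    #t * genChoose μ q ≤ ∑ i ∈ t, ((d i).choose q : ℝ) := by
  have hjensen := (convexOn_truncDescFactorial q).card_mul_map_le_sum
    (fun i _ => Set.mem_univ (d i : ℝ)) (by rwa [nsmul_eq_mul])
  simp only [truncDescFactorial_eq_factorial_mul_genChoose hq, truncDescFactorial_natCast,
    Nat.descFactorial_eq_factorial_mul_choose, Nat.cast_mul, ← mul_sum, mul_left_comm _ (q ! : ℝ)]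
    at hjensen
  exact le_of_mul_le_mul_left hjensen (by positivity)

section DoubleCounting

variable {α β : Type*} [Fintype β] {r : α → β → Prop} [∀ a b, Decidable (r a b)]

lemma card_commonNeighbors_lt {q s : ℕ}
    (hfree : ¬ ∃ S : Finset α, ∃ T : Finset β, #S = q ∧ #T = s ∧ ∀ a ∈ S, ∀ b ∈ T, r a b)
    {Q : Finset α} (hQ : #Q = q) : #{b | ∀ a ∈ Q, r a b} < s := by
  by_contra! hs
  obtain ⟨T, hT, hTcard⟩ := exists_subset_card_eq hs
  exact hfree ⟨Q, T, hQ, hTcard, fun a ha b hb => (mem_filter.1 (hT hb)).2 a ha⟩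

variable [Fintype α] (r)

lemma card_filter_prod_eq_sum_card_filter [DecidablePred fun p : α × β => r p.1 p.2] :
    #{p : α × β | r p.1 p.2} = ∑ b, #{a | r a b} := by
  simp only [card_filter, ← univ_product_univ, sum_product_right]
  congr!

lemma sum_choose_card_filter_eq_sum_card_filter (q : ℕ) :
    ∑ b, (#{a | r a b}).choose q =
      ∑ Q ∈ powersetCard q (univ : Finset α), #{b | ∀ a ∈ Q, r a b} := by
  have hsubsets : ∀ b, powersetCard q ({a | r a b} : Finset α) =
      {Q ∈ powersetCard q (univ : Finset α) | ∀ a ∈ Q, r a b} := by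
    intro b
    ext Q
    simp [mem_powersetCard, subset_iff, and_comm]
  simp_rw [← card_powersetCard, hsubsets]
  exact (sum_card_bipartiteAbove_eq_sum_card_bipartiteBelow (fun Q b => ∀ a ∈ Q, r a b)).symm

variable {r} in
theorem sum_choose_card_filter_le {q s : ℕ}
    (hfree : ¬ ∃ S : Finset α, ∃ T : Finset β, #S = q ∧ #T = s ∧ ∀ a ∈ S, ∀ b ∈ T, r a b) :
    ∑ b, (#{a | r a b}).choose q ≤ (s - 1) * (Fintype.card α).choose q := by
  rw [sum_choose_card_filter_eq_sum_card_filter, ← card_univ, ← card_powersetCard, mul_comm,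
    ← smul_eq_mul, ← sum_const]
  exact sum_le_sum fun Q hQ =>
    Nat.le_sub_one_of_lt (card_commonNeighbors_lt hfree (mem_powersetCard.1 hQ).2)

end DoubleCounting

theorem kovari_sos_turan_type (m n q s : ℕ) (hq : 1 ≤ q) (hs : 1 ≤ s)
    (E : Fin m → Fin n → Prop) [DecidablePred fun p : Fin m × Fin n => E p.1 p.2]
    (ρ : ℝ) (hρ0 : 0 < ρ) (hρ1 : ρ ≤ 1)
    (hdens : ((Finset.univ.filter fun p : Fin m × Fin n => E p.1 p.2).card : ℝ)
      = ρ * m * n)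
    (hm : (q - 1 : ℝ) / ρ < m)
    (hn : (s - 1 : ℝ) * genChoose m q / genChoose (ρ * m) q < n) :
    ∃ S : Finset (Fin m), ∃ T : Finset (Fin n),
      S.card = q ∧ T.card = s ∧ ∀ i ∈ S, ∀ j ∈ T, E i j := by
  classical
  by_contra hfree
  have hρm : (q : ℝ) - 1 < ρ * m := by rwa [div_lt_iff₀ hρ0, mul_comm] at hm
  have hdeg : ∑ j, (#{i | E i j} : ℝ) = #(univ : Finset (Fin n)) * (ρ * m) := by
    rw [← Nat.cast_sum, ← card_filter_prod_eq_sum_card_filter, hdens, card_univ,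
      Fintype.card_fin]
    ring
  have hcount : ∑ j, ((#{i | E i j}).choose q : ℝ) ≤ (s - 1) * m.choose q := by
    have := sum_choose_card_filter_le hfree
    rw [Fintype.card_fin] at this
    exact_mod_cast this
  have hjensen := card_mul_genChoose_le_sum_choose hdeg hρm
  rw [card_univ, Fintype.card_fin] at hjensen
  rw [genChoose_natCast, div_lt_iff₀ (genChoose_pos hρm)] at hn
  linarith
end

section
/- Let B be an atom of a quadratic factor on F_p^n defined by l linearly independent linear polynomials L_1,...,L_l and q quadratic polynomials P_i(x) = x^T M_i x with symmetric matrices M_i. If every nonzero linear combination λ_1 M_1 + ... + λ_q M_q has rank at least r, then for every label c ∈ F_p^{l+q}, the atom B = {x : L_1(x)=c_1,...,L_l(x)=c_l, P_1(x)=c_{l+1},...,P_q(x)=c_{l+q}} satisfies | |B| − p^{−(l+q)} p^n | ≤ p^{−r/2} p^n. -/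
/-!
Count the atom with an additive character `ψ` of `F`: writing `Q x = (xᵀ M_i x)_i`,
`|F|^(l+q) · |B| = ∑_{ν, μ} ∑_x ψ(μ ⬝ (L x - c) + ν ⬝ (Q x - d))`, and for fixed `(ν, μ)` the
inner sum is a unit times `∑_x ψ(xᵀ A x + φ x)` with `A = ∑ ν_i M_i`, `φ = ∑ μ_j L_j`.
The row `ν = 0` contributes exactly `|F|^n`, since by linear independence `φ = 0` only for
`μ = 0`. For `ν ≠ 0`, Weyl differencing (which needs `2 ≠ 0` in `F`) gives
`|∑_x ψ(xᵀ A x + φ x)|² = |F|^n · |∑_{h ∈ ker A} ψ(hᵀ A h + φ h)| ≤ |F|^(2n - rank A)`,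
so each of the remaining `< |F|^(l+q)` terms is at most `|F|^(n - r/2)`.
-/

open Matrix Finset AddChar

namespace AddChar

variable {F : Type*} [Field F] {ψ : AddChar F ℂ}

lemma sum_apply_linearMap_eq_zero {V : Type*} [AddCommGroup V] [Module F V] [Fintype V]
    (hψ : ψ ≠ 0) {φ : V →ₗ[F] F} (hφ : φ ≠ 0) : ∑ v, ψ (φ v) = 0 := by
  refine sum_eq_zero_of_ne_one (ψ := ψ.compAddMonoidHom φ.toAddMonoidHom) fun h ↦ hψ ?_
  ext a
  obtain ⟨v, rfl⟩ := LinearMap.surjective_of_ne_zero hφ a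
  exact DFunLike.congr_fun h v

lemma sum_apply_dotProduct [Fintype F] [DecidableEq F] {κ : Type*} [Fintype κ] [DecidableEq κ]
    (hψ : ψ ≠ 0) (t : κ → F) :
    ∑ a, ψ (t ⬝ᵥ a) = if t = 0 then (Fintype.card F : ℂ) ^ Fintype.card κ else 0 := by
  split_ifs with ht
  · simp [ht]
  · exact sum_apply_linearMap_eq_zero hψ (φ := dotProductEquiv F κ t) (by simpa using ht)

end AddChar

lemma Matrix.card_filter_mulVec_eq_zero {F ι : Type*} [Field F] [Fintype F] [DecidableEq F]
    [Fintype ι] [DecidableEq ι] (A : Matrix ι ι F) :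
    #{h | A *ᵥ h = 0} = Fintype.card F ^ (Fintype.card ι - A.rank) := by
  classical
  have hrank := LinearMap.finrank_range_add_finrank_ker A.mulVecLin
  rw [Module.finrank_fintype_fun_eq_card, ← Matrix.rank] at hrank
  rw [← Fintype.card_subtype, Nat.sub_eq_of_eq_add' hrank.symm, ← Module.card_eq_pow_finrank]
  exact Fintype.card_congr (Equiv.subtypeEquivRight fun _ ↦ Iff.rfl)

section QuadraticCharSum

variable {F ι : Type*} [Field F] [Fintype F] [Fintype ι] [DecidableEq ι]

def quadraticCharSum (ψ : AddChar F ℂ) (A : Matrix ι ι F) (φ : Module.Dual F (ι → F)) : ℂ :=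
  ∑ x, ψ (x ⬝ᵥ A *ᵥ x + φ x)

variable {ψ : AddChar F ℂ} {A : Matrix ι ι F}

lemma quadraticCharSum_mul_conj [DecidableEq F] (h2 : (2 : F) ≠ 0) (hψ : ψ ≠ 0)
    (hA : A.IsSymm) (φ : Module.Dual F (ι → F)) :
    quadraticCharSum ψ A φ * starRingEnd ℂ (quadraticCharSum ψ A φ) =
      (Fintype.card F : ℂ) ^ Fintype.card ι * ∑ h with A *ᵥ h = 0, ψ (h ⬝ᵥ A *ᵥ h + φ h) := by
  set g : (ι → F) → F := fun x ↦ x ⬝ᵥ A *ᵥ x + φ x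
  have hdiff (y h : ι → F) : g (y + h) - g y = ((2 : F) • A *ᵥ h) ⬝ᵥ y + g h := by
    have hsymm : h ⬝ᵥ A *ᵥ y = A *ᵥ h ⬝ᵥ y := by
      rw [dotProduct_mulVec, ← mulVec_transpose, hA.eq]
    simp only [g, mulVec_add, add_dotProduct, dotProduct_add, map_add, smul_dotProduct,
      smul_eq_mul, dotProduct_comm y (A *ᵥ h), hsymm]
    ring
  calc quadraticCharSum ψ A φ * starRingEnd ℂ (quadraticCharSum ψ A φ)
      = ∑ y, ∑ h, ψ (g (y + h) - g y) := by
        rw [quadraticCharSum, map_sum, sum_mul_sum, sum_comm]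
        refine sum_congr rfl fun y _ ↦ ?_
        rw [← Equiv.sum_comp (Equiv.addLeft y)]
        simp [g, ← map_neg_eq_conj, ← map_add_eq_mul, sub_eq_add_neg]
    _ = ∑ h, ψ (g h) * ∑ y, ψ (((2 : F) • A *ᵥ h) ⬝ᵥ y) := by
        simp_rw [hdiff, map_add_eq_mul, mul_sum]
        rw [sum_comm]
        exact sum_congr rfl fun _ _ ↦ sum_congr rfl fun _ _ ↦ mul_comm _ _
    _ = _ := by
        simp only [AddChar.sum_apply_dotProduct hψ, smul_eq_zero, h2, false_or, mul_sum,
          sum_filter, mul_ite, mul_zero]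
        exact sum_congr rfl fun _ _ ↦ by rw [mul_comm]

lemma norm_sq_quadraticCharSum_le (h2 : (2 : F) ≠ 0) (hψ : ψ ≠ 0) (hA : A.IsSymm)
    (φ : Module.Dual F (ι → F)) :
    ‖quadraticCharSum ψ A φ‖ ^ 2 ≤ (Fintype.card F : ℝ) ^ (2 * Fintype.card ι - A.rank) := by
  classical
  have hrank := A.rank_le_card_width
  calc ‖quadraticCharSum ψ A φ‖ ^ 2
      = ‖quadraticCharSum ψ A φ * starRingEnd ℂ (quadraticCharSum ψ A φ)‖ := by
        rw [norm_mul, RCLike.norm_conj, sq]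
    _ = (Fintype.card F : ℝ) ^ Fintype.card ι *
          ‖∑ h with A *ᵥ h = 0, ψ (h ⬝ᵥ A *ᵥ h + φ h)‖ := by
        rw [quadraticCharSum_mul_conj h2 hψ hA, norm_mul, norm_pow, Complex.norm_natCast]
    _ ≤ (Fintype.card F : ℝ) ^ Fintype.card ι * #{h | A *ᵥ h = 0} := by
        gcongr
        refine (norm_sum_le_of_le _ fun h _ ↦ (AddChar.norm_apply ψ _).le).trans ?_
        simp
    _ = (Fintype.card F : ℝ) ^ (2 * Fintype.card ι - A.rank) := by
        rw [A.card_filter_mulVec_eq_zero, Nat.cast_pow, ← pow_add]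
        congr 1
        omega

lemma norm_quadraticCharSum_le (h2 : (2 : F) ≠ 0) (hψ : ψ ≠ 0) (hA : A.IsSymm)
    (φ : Module.Dual F (ι → F)) {r : ℕ} (hr : r ≤ A.rank) :
    ‖quadraticCharSum ψ A φ‖ ≤ (Fintype.card F : ℝ) ^ ((Fintype.card ι : ℝ) - r / 2) := by
  have hrank := A.rank_le_card_width
  have hF : (1 : ℝ) ≤ Fintype.card F := by exact_mod_cast Fintype.card_pos
  refine le_of_pow_le_pow_left₀ two_ne_zero (by positivity) ?_
  calc ‖quadraticCharSum ψ A φ‖ ^ 2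
      ≤ (Fintype.card F : ℝ) ^ (2 * Fintype.card ι - A.rank) :=
        norm_sq_quadraticCharSum_le h2 hψ hA φ
    _ ≤ (Fintype.card F : ℝ) ^ (2 * Fintype.card ι - r) := pow_le_pow_right₀ hF (by omega)
    _ = ((Fintype.card F : ℝ) ^ ((Fintype.card ι : ℝ) - r / 2)) ^ 2 := by
        rw [← Real.rpow_natCast, ← Real.rpow_natCast _ 2, ← Real.rpow_mul (by positivity)]
        congr 1
        push_cast [show r ≤ 2 * Fintype.card ι by omega]
        ring

end QuadraticCharSum

section Atom

variable {F ι κ τ : Type*} [Field F] [Fintype F] [Fintype ι] [DecidableEq ι] [Fintype κ]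
  [DecidableEq κ] [Fintype τ] [DecidableEq τ] {ψ : AddChar F ℂ}

def atom (L : κ → Module.Dual F (ι → F)) (M : τ → Matrix ι ι F) (c : κ → F) (d : τ → F) :
    Set (ι → F) :=
  {x | (∀ j, L j x = c j) ∧ ∀ i, x ⬝ᵥ M i *ᵥ x = d i}

lemma card_fiber_mul_eq_sum {X : Type*} [Fintype X] (hψ : ψ ≠ 0) (f : X → κ → F)
    (g : X → τ → F) (c : κ → F) (d : τ → F) :
    (Fintype.card F : ℂ) ^ (Fintype.card κ + Fintype.card τ) * Nat.card {x | f x = c ∧ g x = d} =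
      ∑ ν : τ → F, ∑ μ : κ → F, ∑ x, ψ (μ ⬝ᵥ (f x - c) + ν ⬝ᵥ (g x - d)) := by
  classical
  symm
  calc ∑ ν : τ → F, ∑ μ : κ → F, ∑ x, ψ (μ ⬝ᵥ (f x - c) + ν ⬝ᵥ (g x - d))
      = ∑ x, (∑ μ : κ → F, ψ ((f x - c) ⬝ᵥ μ)) * ∑ ν : τ → F, ψ ((g x - d) ⬝ᵥ ν) := by
        rw [sum_comm_cycle]
        refine sum_congr rfl fun x _ ↦ ?_
        simp only [sum_mul_sum, map_add_eq_mul, dotProduct_comm (f x - c),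
          dotProduct_comm (g x - d)]
        exact sum_comm
    _ = ∑ x, if f x = c ∧ g x = d then
          (Fintype.card F : ℂ) ^ (Fintype.card κ + Fintype.card τ) else 0 := by
        simp only [AddChar.sum_apply_dotProduct hψ, sub_eq_zero, ite_zero_mul_ite_zero, pow_add]
    _ = _ := by
        rw [sum_ite, sum_const_zero, add_zero, sum_const, nsmul_eq_mul, mul_comm]
        simp [Nat.card_eq_fintype_card, Fintype.card_subtype]

lemma card_atom_mul_eq_sum (hψ : ψ ≠ 0) (L : κ → Module.Dual F (ι → F))
    (M : τ → Matrix ι ι F) (c : κ → F) (d : τ → F) :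
    (Fintype.card F : ℂ) ^ (Fintype.card κ + Fintype.card τ) * Nat.card (atom L M c d) =
      ∑ ν : τ → F, ∑ μ : κ → F, ψ (-(μ ⬝ᵥ c + ν ⬝ᵥ d)) *
        quadraticCharSum ψ (∑ i, ν i • M i) (∑ j, μ j • L j) := by
  have hphase (x : ι → F) (μ : κ → F) (ν : τ → F) :
      μ ⬝ᵥ ((fun j ↦ L j x) - c) + ν ⬝ᵥ ((fun i ↦ x ⬝ᵥ M i *ᵥ x) - d) =
        -(μ ⬝ᵥ c + ν ⬝ᵥ d) + (x ⬝ᵥ (∑ i, ν i • M i) *ᵥ x + (∑ j, μ j • L j) x) := by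
    simp only [dotProduct_sub, sum_mulVec, smul_mulVec, dotProduct_sum, dotProduct_smul,
      LinearMap.sum_apply, LinearMap.smul_apply, smul_eq_mul]
    simp only [dotProduct]
    ring
  simp only [atom, ← funext_iff]
  rw [card_fiber_mul_eq_sum hψ]
  simp only [hphase, map_add_eq_mul, quadraticCharSum, mul_sum]

lemma sum_mul_quadraticCharSum_zero (hψ : ψ ≠ 0) {L : κ → Module.Dual F (ι → F)}
    (hL : LinearIndependent F L) (c : κ → F) :
    ∑ μ : κ → F, ψ (-(μ ⬝ᵥ c)) * quadraticCharSum ψ 0 (∑ j, μ j • L j) =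
      (Fintype.card F : ℂ) ^ Fintype.card ι := by
  rw [sum_eq_single 0]
  · simp [quadraticCharSum]
  · intro μ _ hμ
    have hφ : ∑ j, μ j • L j ≠ 0 := fun h ↦ hμ (funext (Fintype.linearIndependent_iff.1 hL μ h))
    simp only [quadraticCharSum, zero_mulVec, dotProduct_zero, zero_add,
      AddChar.sum_apply_linearMap_eq_zero hψ hφ, mul_zero]
  · simp

end Atom

lemma norm_sum_sum_sub_sum_le {α β E : Type*} [Fintype α] [DecidableEq α] [Fintype β]
    [SeminormedAddCommGroup E] (S : α → β → E) (a₀ : α) {X : ℝ} (hX : 0 ≤ X)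
    (hS : ∀ a ≠ a₀, ∀ b, ‖S a b‖ ≤ X) :
    ‖∑ a, ∑ b, S a b - ∑ b, S a₀ b‖ ≤ Fintype.card α * Fintype.card β * X := by
  rw [← sum_erase_add _ _ (mem_univ a₀), add_sub_cancel_right]
  calc ‖∑ a ∈ univ.erase a₀, ∑ b, S a b‖ ≤ ∑ a ∈ univ.erase a₀, ∑ b, ‖S a b‖ :=
        (norm_sum_le _ _).trans (sum_le_sum fun a _ ↦ norm_sum_le _ _)
    _ ≤ ∑ a ∈ univ.erase a₀, ∑ _b : β, X :=
        sum_le_sum fun a ha ↦ sum_le_sum fun b _ ↦ hS a (ne_of_mem_erase ha) b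
    _ ≤ ∑ _a : α, ∑ _b : β, X :=
        sum_le_sum_of_subset_of_nonneg (erase_subset _ _) fun _ _ _ ↦ by positivity
    _ = Fintype.card α * Fintype.card β * X := by simp [mul_assoc]

lemma abs_sub_rpow_le_of_norm_pow_mul_sub_le {K N m n : ℕ} {X : ℝ} (hK : 0 < K)
    (h : ‖(K : ℂ) ^ m * N - (K : ℂ) ^ n‖ ≤ (K : ℝ) ^ m * X) :
    |(N : ℝ) - (K : ℝ) ^ ((n : ℝ) - m)| ≤ X := by
  have hD : (0 : ℝ) < (K : ℝ) ^ m := by positivity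
  rw [Real.rpow_sub (by positivity), Real.rpow_natCast, Real.rpow_natCast,
    ← mul_le_mul_iff_right₀ hD, ← abs_of_pos hD, ← abs_mul, abs_of_pos hD, mul_sub,
    mul_div_cancel₀ _ hD.ne', ← Real.norm_eq_abs, ← Complex.norm_real]
  push_cast
  exact h

theorem abs_card_atom_sub_le {F ι κ τ : Type*} [Field F] [Fintype F] [Fintype ι] [Fintype κ]
    [Fintype τ] (hF : ringChar F ≠ 2) {L : κ → Module.Dual F (ι → F)}
    (hL : LinearIndependent F L) {M : τ → Matrix ι ι F} (hM : ∀ i, (M i).IsSymm) {r : ℕ}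
    (hr : ∀ ν : τ → F, ν ≠ 0 → r ≤ (∑ i, ν i • M i).rank) (c : κ → F) (d : τ → F) :
    |(Nat.card (atom L M c d) : ℝ) -
        (Fintype.card F : ℝ) ^ ((Fintype.card ι : ℝ) - (Fintype.card κ + Fintype.card τ))| ≤
      (Fintype.card F : ℝ) ^ ((Fintype.card ι : ℝ) - r / 2) := by
  classical
  obtain ⟨ψ, hψ1⟩ := AddChar.exists_apply_ne_zero.2 (one_ne_zero (α := F))
  have hψ : ψ ≠ 0 := ne_zero_iff.2 ⟨1, hψ1⟩
  set S : (τ → F) → (κ → F) → ℂ := fun ν μ ↦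
    ψ (-(μ ⬝ᵥ c + ν ⬝ᵥ d)) * quadraticCharSum ψ (∑ i, ν i • M i) (∑ j, μ j • L j)
  have hmain : ∑ μ, S 0 μ = (Fintype.card F : ℂ) ^ Fintype.card ι := by
    simpa [S] using sum_mul_quadraticCharSum_zero hψ hL c
  have herror (ν : τ → F) (hν : ν ≠ 0) (μ : κ → F) :
      ‖S ν μ‖ ≤ (Fintype.card F : ℝ) ^ ((Fintype.card ι : ℝ) - r / 2) := by
    have hsymm : (∑ i, ν i • M i).IsSymm := by
      simp only [IsSymm, transpose_sum, transpose_smul, (hM _).eq]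
    rw [norm_mul, AddChar.norm_apply, one_mul]
    exact norm_quadraticCharSum_le (Ring.two_ne_zero hF) hψ hsymm _ (hr ν hν)
  have key := norm_sum_sum_sub_sum_le S 0 (by positivity) herror
  rw [← card_atom_mul_eq_sum hψ L M c d, hmain, Fintype.card_fun, Fintype.card_fun] at key
  exact_mod_cast abs_sub_rpow_le_of_norm_pow_mul_sub_le Fintype.card_pos
    (key.trans_eq (by push_cast; ring))

theorem atom_size_general (p n l q : ℕ) (hp2 : 2 < p) [Fact p.Prime]
    (L : Fin l → ((Fin n → ZMod p) →ₗ[ZMod p] ZMod p))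
    (hL : LinearIndependent (ZMod p) L)
    (M : Fin q → Matrix (Fin n) (Fin n) (ZMod p))
    (hsymm : ∀ i, (M i).IsSymm)
    (r : ℕ)
    (hrank : ∀ lam : Fin q → ZMod p, lam ≠ 0 → r ≤ (∑ i, lam i • M i).rank)
    (c : Fin l → ZMod p) (d : Fin q → ZMod p) :
    |((Nat.card {x : Fin n → ZMod p |
        (∀ j, L j x = c j) ∧ ∀ i, x ⬝ᵥ (M i).mulVec x = d i} : ℕ) : ℝ)
      - (p : ℝ) ^ ((n : ℝ) - (l + q))|
      ≤ (p : ℝ) ^ ((n : ℝ) - r / 2) := by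
  have hchar : ringChar (ZMod p) ≠ 2 := by
    rw [ZMod.ringChar_zmod_n]
    exact hp2.ne'
  have h := abs_card_atom_sub_le hchar hL hsymm hrank c d
  simp only [ZMod.card, Fintype.card_fin] at h
  exact h

theorem atom_size (p n l q : ℕ) (hp : p.Prime) (hp2 : 2 < p) [Fact p.Prime]
    (L : Fin l → ((Fin n → ZMod p) →ₗ[ZMod p] ZMod p))
    (hL : LinearIndependent (ZMod p) L)
    (M : Fin q → Matrix (Fin n) (Fin n) (ZMod p))
    (hsymm : ∀ i, (M i).IsSymm)
    (r : ℕ)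
    (hrank : ∀ lam : Fin q → ZMod p, lam ≠ 0 → r ≤ (∑ i, lam i • M i).rank)
    (c : Fin l → ZMod p) (d : Fin q → ZMod p) :
    |((Nat.card {x : Fin n → ZMod p |
        (∀ j, L j x = c j) ∧ ∀ i, x ⬝ᵥ (M i).mulVec x = d i} : ℕ) : ℝ)
      - (p : ℝ) ^ ((n : ℝ) - (l + q))|
      ≤ (p : ℝ) ^ ((n : ℝ) - r / 2) :=
  atom_size_general p n l q hp2 L hL M hsymm r hrank c d
end

section
/- Let B be a quadratic factor on F_p^n defined by l linearly independent linear forms and q quadratic forms x^T M_i x such that every nonzero linear combination of M_1,...,M_q has rank n. If l + q < n/2, then every atom of B is non-empty. -/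
/-!
Count the points of an atom with additive characters: `|B| p^(l+q)` is the sum over all
`u = (t, s)` of the exponential sums `∑ₓ ψ(t·(L x - c) + s·(Q x - d))`. The term `u = 0`
contributes `p^n`. A term with `s = 0 ≠ t` vanishes because `∑ tⱼ Lⱼ` is a nonzero linear form,
and a term with `s ≠ 0` is a Gauss sum of the nondegenerate quadratic form `∑ sᵢ Mᵢ`, of absolute
value `p^(n/2)` (square it and substitute `x = y + h`: the sum over `y` forces `h = 0`). Fewer
than `p^(l+q) < p^(n/2)` such error terms cannot cancel the main term.
-/

open Matrix Finset

variable {F : Type*} [Field F] {ψ : AddChar F ℂ} {ι : Type*} [Fintype ι]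

lemma AddChar.sum_comp_linearMap_eq_zero {V : Type*} [AddCommGroup V] [Module F V] [Fintype V]
    (hψ : ψ ≠ 1) {φ : V →ₗ[F] F} (hφ : φ ≠ 0) : ∑ x, ψ (φ x) = 0 := by
  obtain ⟨a, ha⟩ := ne_one_iff.1 hψ
  obtain ⟨v, hv⟩ : ∃ v, φ v ≠ 0 := by
    by_contra! h
    exact hφ (LinearMap.ext h)
  refine sum_eq_zero_of_ne_one (ψ := ψ.compAddMonoidHom φ.toAddMonoidHom)
    (ne_one_iff.2 ⟨(a / φ v) • v, ?_⟩)
  simpa [hv] using ha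

lemma AddChar.sum_dotProduct_eq_zero [Fintype F] [DecidableEq ι] (hψ : ψ ≠ 1) {v : ι → F}
    (hv : v ≠ 0) : ∑ t : ι → F, ψ (t ⬝ᵥ v) = 0 := by
  simp_rw [dotProduct_comm _ v]
  exact sum_comp_linearMap_eq_zero hψ ((dotProductEquiv F ι).map_ne_zero_iff.2 hv)

lemma AddChar.natCast_card_filter_eq_zero_mul {X κ : Type*} [Fintype X] [Fintype κ]
    [DecidableEq κ] [Fintype F] [DecidableEq F] (hψ : ψ ≠ 1) (f : X → κ → F) :
    (#{x | f x = 0} : ℂ) * Fintype.card (κ → F) = ∑ u : κ → F, ∑ x, ψ (u ⬝ᵥ f x) := by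
  rw [natCast_card_filter, sum_mul, sum_comm]
  refine sum_congr rfl fun x _ => ?_
  by_cases hx : f x = 0
  · simp [hx]
  · simp [hx, sum_dotProduct_eq_zero hψ hx]

lemma Matrix.add_dotProduct_mulVec_add {R : Type*} [CommRing R] (A : Matrix ι ι R)
    (y h : ι → R) :
    (y + h) ⬝ᵥ A *ᵥ (y + h) = y ⬝ᵥ A *ᵥ y + h ⬝ᵥ A *ᵥ h + y ⬝ᵥ (A + Aᵀ) *ᵥ h := by
  have : h ⬝ᵥ A *ᵥ y = y ⬝ᵥ Aᵀ *ᵥ h := by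
    rw [mulVec_transpose, dotProduct_mulVec, dotProduct_comm]
  simp only [mulVec_add, add_mulVec, dotProduct_add, add_dotProduct, this]
  ring

lemma Matrix.mulVec_injective_of_rank_eq_card {A : Matrix ι ι F}
    (h : A.rank = Fintype.card ι) : Function.Injective A.mulVec := by
  have hsurj : Function.Surjective A.mulVecLin := LinearMap.range_eq_top.mp <|
    Submodule.eq_top_of_finrank_eq (by rw [← Matrix.rank, h, Module.finrank_fintype_fun_eq_card])
  exact LinearMap.injective_iff_surjective.mpr hsurj

theorem AddChar.sq_norm_sum_quadratic [Fintype F] [DecidableEq ι] (hψ : ψ ≠ 1)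
    {A : Matrix ι ι F} (hA : Function.Injective (A + Aᵀ).mulVec) (φ : (ι → F) →ₗ[F] F) :
    ‖∑ x, ψ (x ⬝ᵥ A *ᵥ x + φ x)‖ ^ 2 = Fintype.card (ι → F) := by
  set Q : (ι → F) → F := fun x => x ⬝ᵥ A *ᵥ x + φ x
  have hQ (y h : ι → F) : Q (y + h) - Q y = Q h + y ⬝ᵥ (A + Aᵀ) *ᵥ h := by
    simp only [Q, add_dotProduct_mulVec_add, map_add]
    ring
  have key : (∑ x, ψ (Q x)) * (starRingEnd ℂ) (∑ x, ψ (Q x)) = Fintype.card (ι → F) :=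
    calc (∑ x, ψ (Q x)) * (starRingEnd ℂ) (∑ x, ψ (Q x))
        = ∑ y, ∑ x, ψ (Q x - Q y) := by
          simp_rw [map_sum, sum_mul_sum, ← map_neg_eq_conj, ← map_add_eq_mul, ← sub_eq_add_neg]
          exact sum_comm
      _ = ∑ y, ∑ h, ψ (Q (y + h) - Q y) :=
          sum_congr rfl fun y _ => (Fintype.sum_equiv (Equiv.addLeft y) _ _ fun _ => rfl).symm
      _ = ∑ h, ψ (Q h) * ∑ y, ψ (y ⬝ᵥ (A + Aᵀ) *ᵥ h) := by
          simp_rw [hQ, map_add_eq_mul, mul_sum]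
          exact sum_comm
      _ = Fintype.card (ι → F) := by
          rw [Fintype.sum_eq_single 0 fun h hh => by
            rw [sum_dotProduct_eq_zero hψ fun h0 => hh (hA (by rw [h0, mulVec_zero])), mul_zero]]
          simp [Q]
  rw [Complex.mul_conj'] at key
  exact_mod_cast key

section QuadraticFactor

variable {J I : Type*} [Fintype J] [Fintype I]
  (L : J → (ι → F) →ₗ[F] F) (M : I → Matrix ι ι F) (c : J → F) (d : I → F)

/-- The atom with label `(c, d)` is the zero set of this map. -/
def atomResidual (x : ι → F) : J ⊕ I → F :=
  Sum.elim (fun j => L j x - c j) (fun i => x ⬝ᵥ M i *ᵥ x - d i)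

lemma dotProduct_atomResidual (u : J ⊕ I → F) (x : ι → F) :
    u ⬝ᵥ atomResidual L M c d x =
      x ⬝ᵥ (∑ i, u (.inr i) • M i) *ᵥ x + (∑ j, u (.inl j) • L j) x
        - (∑ j, u (.inl j) * c j + ∑ i, u (.inr i) * d i) := by
  rw [dotProduct, Fintype.sum_sum_type]
  simp only [atomResidual, Sum.elim_inl, Sum.elim_inr, mul_sub, sum_sub_distrib, sum_mulVec,
    dotProduct_sum, smul_mulVec, dotProduct_smul, smul_eq_mul, LinearMap.sum_apply,
    LinearMap.smul_apply]
  ring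

variable {L M}

lemma norm_sum_addChar_atomResidual_le [Fintype F] [DecidableEq ι] (hψ : ψ ≠ 1)
    (h2 : (2 : F) ≠ 0) (hL : LinearIndependent F L) (hsymm : ∀ i, (M i).IsSymm)
    (hrank : ∀ s : I → F, s ≠ 0 → (∑ i, s i • M i).rank = Fintype.card ι)
    {u : J ⊕ I → F} (hu : u ≠ 0) :
    ‖∑ x, ψ (u ⬝ᵥ atomResidual L M c d x)‖ ≤ √(Fintype.card (ι → F)) := by
  simp_rw [dotProduct_atomResidual, AddChar.map_sub_eq_div, ← sum_div, norm_div,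
    AddChar.norm_apply, div_one]
  set A := ∑ i, u (.inr i) • M i
  set φ := ∑ j, u (.inl j) • L j
  by_cases hs : u ∘ Sum.inr = 0
  · have hA : A = 0 := by simp [A, show ∀ i, u (.inr i) = 0 from congrFun hs]
    have hφ : φ ≠ 0 := fun hφ => hu <| by
      have ht := Fintype.linearIndependent_iff.mp hL _ hφ
      ext (j | i)
      exacts [ht j, congrFun hs i]
    simp only [hA, zero_mulVec, dotProduct_zero, zero_add,
      AddChar.sum_comp_linearMap_eq_zero hψ hφ, norm_zero]
    positivity
  · have hAsymm : Aᵀ = A := by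
      simp only [A, transpose_sum, transpose_smul, (hsymm _).eq]
    have hAinj : Function.Injective (A + Aᵀ).mulVec := by
      rw [hAsymm, ← two_smul F A]
      intro x y hxy
      simp only [smul_mulVec] at hxy
      exact mulVec_injective_of_rank_eq_card (hrank _ hs) (smul_right_injective _ h2 hxy)
    exact Real.le_sqrt_of_sq_le (AddChar.sq_norm_sum_quadratic hψ hAinj φ).le

theorem exists_atomResidual_eq_zero [Finite F] (h2 : (2 : F) ≠ 0) (hL : LinearIndependent F L)
    (hsymm : ∀ i, (M i).IsSymm)
    (hrank : ∀ s : I → F, s ≠ 0 → (∑ i, s i • M i).rank = Fintype.card ι)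
    (hsize : 2 * (Fintype.card J + Fintype.card I) < Fintype.card ι) :
    ∃ x, atomResidual L M c d x = 0 := by
  classical
  have := Fintype.ofFinite F
  obtain ⟨ψ, hψ1⟩ := AddChar.exists_apply_ne_zero.2 (one_ne_zero : (1 : F) ≠ 0)
  have hψ : ψ ≠ 1 := AddChar.ne_one_iff.2 ⟨1, hψ1⟩
  set N : ℝ := (Fintype.card (ι → F) : ℝ) with hN
  set S : (J ⊕ I → F) → ℂ := fun u => ∑ x, ψ (u ⬝ᵥ atomResidual L M c d x)
  by_contra! hempty
  have hcount := AddChar.natCast_card_filter_eq_zero_mul hψ (atomResidual L M c d)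
  rw [filter_false_of_mem fun x _ => hempty x, card_empty, Nat.cast_zero, zero_mul,
    Fintype.sum_eq_add_sum_compl 0] at hcount
  have hmain : N ≤ Fintype.card (J ⊕ I → F) * √N :=
    calc N = ‖∑ u ∈ {0}ᶜ, S u‖ := by
          rw [← neg_eq_of_add_eq_zero_right hcount.symm, norm_neg]
          simp [N]
      _ ≤ ∑ u ∈ {0}ᶜ, ‖S u‖ := norm_sum_le _ _
      _ ≤ ∑ _u ∈ ({0}ᶜ : Finset (J ⊕ I → F)), √N := sum_le_sum fun u hu =>
          norm_sum_addChar_atomResidual_le c d hψ h2 hL hsymm hrank (by simpa using hu)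
      _ ≤ Fintype.card (J ⊕ I → F) * √N := by
          rw [sum_const, nsmul_eq_mul]
          gcongr
          exact_mod_cast card_le_univ _
  have hsmall : (Fintype.card (J ⊕ I → F) : ℝ) < √N := by
    have hF : (1 : ℝ) < Fintype.card F := by exact_mod_cast Fintype.one_lt_card
    rw [Real.lt_sqrt (by positivity), hN]
    simp only [Fintype.card_fun, Fintype.card_sum, Nat.cast_pow, ← pow_mul]
    exact pow_lt_pow_right₀ hF (by omega)
  have hNpos : 0 < √N := Real.sqrt_pos.2 (by positivity)
  nlinarith [Real.mul_self_sqrt (show 0 ≤ N by positivity)]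

end QuadraticFactor

theorem atoms_nonempty_general (p n l q : ℕ) (hp2 : 2 < p) [Fact p.Prime]
    (L : Fin l → ((Fin n → ZMod p) →ₗ[ZMod p] ZMod p))
    (hL : LinearIndependent (ZMod p) L)
    (M : Fin q → Matrix (Fin n) (Fin n) (ZMod p))
    (hsymm : ∀ i, (M i).IsSymm)
    (hrank : ∀ lam : Fin q → ZMod p, lam ≠ 0 → (∑ i, lam i • M i).rank = n)
    (hlq : (l + q : ℝ) < (n : ℝ) / 2) :
    ∀ (c : Fin l → ZMod p) (d : Fin q → ZMod p),
      ∃ x : Fin n → ZMod p,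
        (∀ j, L j x = c j) ∧ ∀ i, x ⬝ᵥ (M i).mulVec x = d i := by
  intro c d
  have h2 : (2 : ZMod p) ≠ 0 := Ring.two_ne_zero (by rw [ZMod.ringChar_zmod_n]; omega)
  have hsize : 2 * (Fintype.card (Fin l) + Fintype.card (Fin q)) < Fintype.card (Fin n) := by
    simp only [Fintype.card_fin]
    exact_mod_cast (by linarith : (2 * (l + q) : ℝ) < n)
  obtain ⟨x, hx⟩ :=
    exists_atomResidual_eq_zero c d h2 hL hsymm (by simpa only [Fintype.card_fin]) hsize
  exact ⟨x, fun j => sub_eq_zero.1 (congrFun hx (.inl j)),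
    fun i => sub_eq_zero.1 (congrFun hx (.inr i))⟩

theorem atoms_nonempty (p n l q : ℕ) (hp : p.Prime) (hp2 : 2 < p) [Fact p.Prime]
    (L : Fin l → ((Fin n → ZMod p) →ₗ[ZMod p] ZMod p))
    (hL : LinearIndependent (ZMod p) L)
    (M : Fin q → Matrix (Fin n) (Fin n) (ZMod p))
    (hsymm : ∀ i, (M i).IsSymm)
    (hrank : ∀ lam : Fin q → ZMod p, lam ≠ 0 → (∑ i, lam i • M i).rank = n)
    (hlq : (l + q : ℝ) < (n : ℝ) / 2) :
    ∀ (c : Fin l → ZMod p) (d : Fin q → ZMod p),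
      ∃ x : Fin n → ZMod p,
        (∀ j, L j x = c j) ∧ ∀ i, x ⬝ᵥ (M i).mulVec x = d i :=
  atoms_nonempty_general p n l q hp2 L hL M hsymm hrank hlq
end

section
/- For n ≥ 13 and any odd prime p, the quadratic Green-Sanders example QGS(p,n) has VC_2-dimension at least 2. -/
open Matrix

/-- The quadratic Green–Sanders example in `F_p^n`, defined from a family of
symmetric matrices `M`. -/
def QGS (p n : ℕ) [NeZero p] (M : Fin n → Matrix (Fin n) (Fin n) (ZMod p)) :
    Set (Fin n → ZMod p) :=
  {x | ∃ i : Fin n, (∀ j < i, x ⬝ᵥ (M j).mulVec x = 0) ∧ x ⬝ᵥ (M i).mulVec x = 1}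

/-- `A` has VC₂-dimension at least `k`. -/
def VC2ge {G : Type*} [AddCommGroup G] (A : Set G) (k : ℕ) : Prop :=
  ∃ x y : Fin k → G, ∃ z : Finset (Fin k × Fin k) → G,
    ∀ (S : Finset (Fin k × Fin k)) (i j : Fin k),
      x i + y j + z S ∈ A ↔ (i, j) ∈ S

/-!
Write `Q₀, Q₁` for the quadratic forms of `M 0, M 1` and `B₀, B₁` for their polarisations.
Chevalley–Warning (the common zero set of `m` quadratic and `k` linear forms is nontrivial once
`n > 2m + k`) gives vectors `a, b, u, v`, isotropic and pairwise `B₀`-orthogonal, with `v` also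
`Q₁`-isotropic and `B₁`-orthogonal to `a, b, u`, such that the functionals `B₀(a, ·)`, `B₀(b, ·)`,
`B₀(u, ·)`, `B₀(v, ·)`, `B₁(v, ·)` are independent. For `B₀(v, ·)`, `B₁(v, ·)` this is the rank
condition on `λ₀ M 0 + λ₁ M 1`; each later vector is kept off the earlier span by further linear
conditions.

With `x_i = i a` and `y_j = j b`, the value `Q₀(i a + j b + z) = Q₀ z + 2i B₀(a, z) + 2j B₀(b, z)` is
affine in `(i, j)`. Solving a linear system for `z` and then moving `z` along `u` and along `v`
prescribes `Q₀ z`, `B₀(a, z)`, `B₀(b, z)` and the value of `Q₁` at one cell. A cell lies in `QGS`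
iff `Q₀ = 1` there, unless `Q₀ = 0`, when `Q₁` decides. For each `S ⊆ [2]²` a finite search gives
affine values in `{-1, 0, 1, 2}` that are `1` exactly on `S`, except at one cell `d` where the value
is `0` and `Q₁` decides. For `p = 3` such a cell cannot always be avoided.
-/

section LinearAlgebra

variable {K : Type*} [Field K]

theorem Matrix.mulVec_surjective_of_rank_eq {m σ : Type*} [Fintype m] [Fintype σ]
    (A : Matrix m σ K) (h : A.rank = Fintype.card m) : Function.Surjective A.mulVec := by
  have : LinearMap.range A.mulVecLin = ⊤ := Submodule.eq_top_of_finrank_eq <| by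
    rw [Module.finrank_fintype_fun_eq_card, ← h]
    rfl
  exact LinearMap.range_eq_top.mp this

theorem Matrix.isUnit_of_rank_eq {m : Type*} [Fintype m] [DecidableEq m]
    (A : Matrix m m K) (h : A.rank = Fintype.card m) : IsUnit A :=
  mulVec_surjective_iff_isUnit.mp (A.mulVec_surjective_of_rank_eq h)

theorem isUnit_smul_add_smul_of_forall_rank_eq {ι σ : Type*} [Fintype ι] [DecidableEq ι]
    [Fintype σ] [DecidableEq σ] {M : ι → Matrix σ σ K}
    (hrank : ∀ lam : ι → K, lam ≠ 0 → (∑ i, lam i • M i).rank = Fintype.card σ)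
    {i j : ι} (hij : i ≠ j) {α β : K} (hαβ : α ≠ 0 ∨ β ≠ 0) :
    IsUnit (α • M i + β • M j) := by
  have hlam : (Pi.single i α + Pi.single j β : ι → K) ≠ 0 := fun h => by
    have hi := congrFun h i
    have hj := congrFun h j
    simp [hij, hij.symm] at hi hj
    exact hαβ.elim (· hi) (· hj)
  have := hrank _ hlam
  simp only [Pi.add_apply, add_smul, Finset.sum_add_distrib, Pi.single_apply, ite_smul,
    zero_smul, Finset.sum_ite_eq', Finset.mem_univ, if_true] at this
  exact isUnit_of_rank_eq _ this

theorem LinearIndependent.exists_dotProduct_eq {ι σ : Type*} [Fintype ι] [Fintype σ]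
    {w : ι → σ → K} (hw : LinearIndependent K w) (r : ι → K) : ∃ z, ∀ i, w i ⬝ᵥ z = r i := by
  obtain ⟨z, hz⟩ := (Matrix.of w).mulVec_surjective_of_rank_eq
    (LinearIndependent.rank_matrix (M := Matrix.of w) hw) r
  exact ⟨z, fun i => congrFun hz i⟩

theorem LinearIndependent.exists_linearIndependent_cons {σ : Type*} [Fintype σ] {k : ℕ}
    {w : Fin k → σ → K} (hw : LinearIndependent K w) :
    ∃ γ : Fin k → σ → K, ∀ y, y ≠ 0 → (∀ i, γ i ⬝ᵥ y = 0) →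
      LinearIndependent K (Fin.cons y w : Fin (k + 1) → σ → K) := by
  classical
  choose γ hγ using fun i => hw.exists_dotProduct_eq (Pi.single i 1)
  refine ⟨γ, fun y hy0 hγy => linearIndependent_finCons.mpr ⟨hw, fun hy => hy0 ?_⟩⟩
  obtain ⟨c, rfl⟩ := (Submodule.mem_span_range_iff_exists_fun K).mp hy
  have hc : ∀ i, c i = 0 := fun i => by
    simpa [dotProduct_comm (γ i), sum_dotProduct, smul_dotProduct, hγ, Pi.single_apply]
      using hγy i
  simp [hc]

end LinearAlgebra

section SymmetricForm

variable {R σ : Type*} [CommRing R] [Fintype σ] {A : Matrix σ σ R}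

theorem Matrix.IsSymm.dotProduct_mulVec_comm (hA : A.IsSymm) (x y : σ → R) :
    x ⬝ᵥ A *ᵥ y = y ⬝ᵥ A *ᵥ x := by
  rw [dotProduct_mulVec, dotProduct_comm, ← mulVec_transpose, hA.eq]

theorem Matrix.IsSymm.add_dotProduct_mulVec_add (hA : A.IsSymm) (x y : σ → R) :
    (x + y) ⬝ᵥ A *ᵥ (x + y) = x ⬝ᵥ A *ᵥ x + 2 * (x ⬝ᵥ A *ᵥ y) + y ⬝ᵥ A *ᵥ y := by
  simp only [mulVec_add, dotProduct_add, add_dotProduct, hA.dotProduct_mulVec_comm y x]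
  ring

theorem Matrix.IsSymm.add_smul_dotProduct_mulVec_add_smul (hA : A.IsSymm) (x y : σ → R)
    (hy : y ⬝ᵥ A *ᵥ y = 0) (r : R) :
    (x + r • y) ⬝ᵥ A *ᵥ (x + r • y) = x ⬝ᵥ A *ᵥ x + 2 * r * (x ⬝ᵥ A *ᵥ y) := by
  simp only [hA.add_dotProduct_mulVec_add, mulVec_smul, dotProduct_smul, smul_dotProduct, hy,
    smul_eq_mul]
  ring

theorem Matrix.IsSymm.smul_add_smul_add_dotProduct_mulVec (hA : A.IsSymm) {a b : σ → R}
    (ha : a ⬝ᵥ A *ᵥ a = 0) (hb : b ⬝ᵥ A *ᵥ b = 0) (hab : a ⬝ᵥ A *ᵥ b = 0) (s t : R)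
    (z : σ → R) :
    (s • a + t • b + z) ⬝ᵥ A *ᵥ (s • a + t • b + z) =
      z ⬝ᵥ A *ᵥ z + 2 * s * (a ⬝ᵥ A *ᵥ z) + 2 * t * (b ⬝ᵥ A *ᵥ z) := by
  rw [hA.add_dotProduct_mulVec_add, hA.add_dotProduct_mulVec_add]
  simp only [mulVec_smul, add_dotProduct, dotProduct_smul, smul_dotProduct, ha, hb, hab,
    smul_eq_mul]
  ring

end SymmetricForm

open MvPolynomial in
theorem exists_ne_zero_isotropic_of_card_lt {K σ ι κ : Type*} [Field K] [Fintype K]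
    [Fintype σ] [Fintype ι] [Fintype κ]
    (Q : ι → Matrix σ σ K) (L : κ → σ → K)
    (h : 2 * Fintype.card ι + Fintype.card κ < Fintype.card σ) :
    ∃ x ≠ 0, (∀ i, x ⬝ᵥ Q i *ᵥ x = 0) ∧ ∀ j, L j ⬝ᵥ x = 0 := by
  classical
  let f : ι ⊕ κ → MvPolynomial σ K := Sum.elim
    (fun i => ∑ s, ∑ t, C (Q i s t) * X s * X t) (fun j => ∑ s, C (L j s) * X s)
  have hf : ∀ x, (∀ c, eval x (f c) = 0) ↔ (∀ i, x ⬝ᵥ Q i *ᵥ x = 0) ∧ ∀ j, L j ⬝ᵥ x = 0 := by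
    intro x
    have hQ : ∀ i, eval x (f (.inl i)) = x ⬝ᵥ Q i *ᵥ x := fun i => by
      simp only [f, Sum.elim_inl, map_sum, map_mul, eval_C, eval_X, dotProduct, mulVec,
        Finset.mul_sum]
      exact Finset.sum_congr rfl fun s _ => Finset.sum_congr rfl fun t _ => by ring
    have hL : ∀ j, eval x (f (.inr j)) = L j ⬝ᵥ x := fun j => by
      simp [f, dotProduct]
    simp [Sum.forall, hQ, hL]
  have hdeg : ∑ c, (f c).totalDegree < Fintype.card σ := by
    have hle : ∀ c, (f c).totalDegree ≤ Sum.elim (fun _ => 2) (fun _ => 1) c := by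
      rintro (i | j)
      · exact IsHomogeneous.totalDegree_le <| IsHomogeneous.sum _ _ _ fun s _ =>
          IsHomogeneous.sum _ _ _ fun t _ => (isHomogeneous_C_mul_X _ s).mul (isHomogeneous_X _ t)
      · exact IsHomogeneous.totalDegree_le <| IsHomogeneous.sum _ _ _ fun s _ =>
          isHomogeneous_C_mul_X _ s
    calc ∑ c, (f c).totalDegree ≤ ∑ c, Sum.elim (fun _ => 2) (fun _ => 1) c :=
          Finset.sum_le_sum fun c _ => hle c
      _ = 2 * Fintype.card ι + Fintype.card κ := by simp [Fintype.sum_sum_type, mul_comm]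
      _ < Fintype.card σ := h
  have hzero : ∀ c, eval 0 (f c) = 0 := fun c => (hf 0).mpr ⟨by simp, by simp⟩ c
  -- Chevalley–Warning: the number of common zeros is divisible by the characteristic.
  have hcard : 1 < Fintype.card { x : σ → K // ∀ c, eval x (f c) = 0 } := by
    refine lt_of_le_of_ne (Fintype.card_pos_iff.mpr ⟨⟨0, hzero⟩⟩) fun h1 => ?_
    have := char_dvd_card_solutions_of_fintype_sum_lt (ringChar K) hdeg
    rw [← h1, Nat.dvd_one] at this
    exact CharP.ringChar_ne_one this
  obtain ⟨⟨x, hx⟩, hne⟩ := Fintype.exists_ne_of_one_lt_card hcard ⟨0, hzero⟩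
  exact ⟨x, fun h0 => hne (Subtype.ext h0), (hf x).mp hx⟩

section Frame

variable {K σ : Type*} [Field K] [Fintype σ] {A B : Matrix σ σ K}

theorem exists_isotropic_linearIndependent_cons [Fintype K] [DecidableEq σ] (hA : IsUnit A) {k : ℕ}
    {f : Fin k → σ → K} (hf : LinearIndependent K f) (hk : 2 + 2 * k < Fintype.card σ) :
    ∃ x, x ⬝ᵥ A *ᵥ x = 0 ∧ (∀ i, f i ⬝ᵥ x = 0) ∧
      LinearIndependent K (Fin.cons (x ᵥ* A) f : Fin (k + 1) → σ → K) := by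
  obtain ⟨γ, hγ⟩ := hf.exists_linearIndependent_cons
  obtain ⟨x, hx0, hxA, hxL⟩ := exists_ne_zero_isotropic_of_card_lt (fun _ : Unit => A)
    (Sum.elim f fun i => A *ᵥ γ i) (by simpa [two_mul, add_assoc] using hk)
  refine ⟨x, hxA (), fun i => hxL (.inl i), hγ _ ?_ fun i => ?_⟩
  · exact fun h => hx0 (vecMul_injective_iff_isUnit.mpr hA (h.trans (zero_vecMul A).symm))
  · rw [dotProduct_comm, ← dotProduct_mulVec, dotProduct_comm]
    exact hxL (.inr i)

structure IsGridFrame (A B : Matrix σ σ K) (a b u v : σ → K) : Prop where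
  linearIndependent : LinearIndependent K ![b ᵥ* A, a ᵥ* A, u ᵥ* A, v ᵥ* A, v ᵥ* B]
  isotropic_a : a ⬝ᵥ A *ᵥ a = 0
  isotropic_b : b ⬝ᵥ A *ᵥ b = 0
  isotropic_u : u ⬝ᵥ A *ᵥ u = 0
  isotropic_v : v ⬝ᵥ A *ᵥ v = 0
  isotropic_v' : v ⬝ᵥ B *ᵥ v = 0
  orthogonal_a_b : a ⬝ᵥ A *ᵥ b = 0
  orthogonal_a_u : a ⬝ᵥ A *ᵥ u = 0
  orthogonal_b_u : b ⬝ᵥ A *ᵥ u = 0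
  orthogonal_a_v : a ⬝ᵥ A *ᵥ v = 0
  orthogonal_b_v : b ⬝ᵥ A *ᵥ v = 0
  orthogonal_u_v : u ⬝ᵥ A *ᵥ v = 0
  orthogonal_a_v' : a ⬝ᵥ B *ᵥ v = 0
  orthogonal_b_v' : b ⬝ᵥ B *ᵥ v = 0
  orthogonal_u_v' : u ⬝ᵥ B *ᵥ v = 0

theorem exists_isGridFrame [Fintype K] [DecidableEq σ] (hA : A.IsSymm) (hB : B.IsSymm)
    (hAB : ∀ α β : K, α ≠ 0 ∨ β ≠ 0 → IsUnit (α • A + β • B)) (hn : 10 < Fintype.card σ) :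
    ∃ a b u v, IsGridFrame A B a b u v := by
  have hA₀ : IsUnit A := by simpa using hAB 1 0 (.inl one_ne_zero)
  obtain ⟨v, hv0, hvQ, -⟩ := exists_ne_zero_isotropic_of_card_lt ![A, B] ![]
    (by simp; omega)
  have hv : LinearIndependent K ![v ᵥ* A, v ᵥ* B] := by
    refine LinearIndependent.pair_iff.mpr fun s t hst => ?_
    by_contra hne
    rw [← vecMul_smul, ← vecMul_smul, ← vecMul_add] at hst
    exact hv0 (vecMul_injective_iff_isUnit.mpr (hAB s t (not_and_or.mp hne))
      (hst.trans (zero_vecMul _).symm))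
  obtain ⟨u, huQ, hu, hvu⟩ := exists_isotropic_linearIndependent_cons hA₀ hv (by omega)
  obtain ⟨a, haQ, ha, hvua⟩ := exists_isotropic_linearIndependent_cons hA₀ hvu (by omega)
  obtain ⟨b, hbQ, hb, hvuab⟩ := exists_isotropic_linearIndependent_cons hA₀ hvua (by omega)
  simp only [Fin.forall_fin_succ, Fin.cons_vecCons, cons_val_zero, cons_val_succ,
    cons_val_fin_one, forall_const, ← dotProduct_mulVec] at hvQ hu ha hb
  obtain ⟨hvQA, hvQB⟩ := hvQ
  obtain ⟨hvAu, hvBu⟩ := hu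
  obtain ⟨huAa, hvAa, hvBa⟩ := ha
  obtain ⟨haAb, huAb, hvAb, hvBb⟩ := hb
  rw [hA.dotProduct_mulVec_comm] at huAa hvAa huAb hvAb hvAu
  rw [hB.dotProduct_mulVec_comm] at hvBa hvBb hvBu
  exact ⟨a, b, u, v, hvuab, haQ, hbQ, huQ, hvQA, hvQB, haAb, huAa, huAb, hvAa, hvAb, hvAu,
    hvBa, hvBb, hvBu⟩

theorem IsGridFrame.exists_translate {a b u v : σ → K} (hF : IsGridFrame A B a b u v)
    (hA : A.IsSymm) (hB : B.IsSymm) (h2 : (2 : K) ≠ 0) (c α β τ s t : K) :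
    ∃ z, z ⬝ᵥ A *ᵥ z = c ∧ a ⬝ᵥ A *ᵥ z = α ∧ b ⬝ᵥ A *ᵥ z = β ∧
      (s • a + t • b + z) ⬝ᵥ B *ᵥ (s • a + t • b + z) = τ := by
  obtain ⟨z₀, hz₀⟩ := hF.linearIndependent.exists_dotProduct_eq ![β, α, 1, 0, 1]
  simp only [Fin.forall_fin_succ, cons_val_zero, cons_val_succ, cons_val_fin_one, forall_const,
    ← dotProduct_mulVec] at hz₀
  obtain ⟨hbz, haz, huz, hvz, hvz'⟩ := hz₀
  set z₁ := z₀ + ((c - z₀ ⬝ᵥ A *ᵥ z₀) / 2) • u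
  set w := s • a + t • b + z₁
  have hz₁A : z₁ ⬝ᵥ A *ᵥ v = 0 := by
    simp [z₁, add_dotProduct, hF.orthogonal_u_v, hA.dotProduct_mulVec_comm z₀, hvz]
  have hwB : w ⬝ᵥ B *ᵥ v = 1 := by
    simp [w, z₁, add_dotProduct, hF.orthogonal_a_v', hF.orthogonal_b_v', hF.orthogonal_u_v',
      hB.dotProduct_mulVec_comm z₀, hvz']
  refine ⟨z₁ + ((τ - w ⬝ᵥ B *ᵥ w) / 2) • v, ?_, ?_, ?_, ?_⟩
  · rw [hA.add_smul_dotProduct_mulVec_add_smul _ _ hF.isotropic_v, hz₁A,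
      hA.add_smul_dotProduct_mulVec_add_smul _ _ hF.isotropic_u, hA.dotProduct_mulVec_comm z₀ u,
      huz]
    field_simp
    ring
  · simp only [z₁, mulVec_add, mulVec_smul, dotProduct_add, dotProduct_smul, smul_eq_mul,
      hF.orthogonal_a_u, hF.orthogonal_a_v, haz, mul_zero, add_zero]
  · simp only [z₁, mulVec_add, mulVec_smul, dotProduct_add, dotProduct_smul, smul_eq_mul,
      hF.orthogonal_b_u, hF.orthogonal_b_v, hbz, mul_zero, add_zero]
  · rw [← add_assoc, hB.add_smul_dotProduct_mulVec_add_smul _ _ hF.isotropic_v', hwB]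
    field_simp
    ring

end Frame

theorem exists_grid_values (S : Finset (Fin 2 × Fin 2)) :
    ∃ c α β : ℤ, ∃ d : Fin 2 × Fin 2, ∀ i j : Fin 2,
      (c + i * α + j * β = 0 ∧ (i, j) = d) ∨ (c + i * α + j * β = 1 ∧ (i, j) ∈ S) ∨
        ((c + i * α + j * β = -1 ∨ c + i * α + j * β = 2) ∧ (i, j) ∉ S) := by
  have : ∀ S : Finset (Fin 2 × Fin 2), ∃ c ∈ Finset.Icc (-1 : ℤ) 2,
      ∃ α ∈ Finset.Icc (-2 : ℤ) 2, ∃ β ∈ Finset.Icc (-2 : ℤ) 2, ∃ d : Fin 2 × Fin 2,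
        ∀ i j : Fin 2,
          (c + i * α + j * β = 0 ∧ (i, j) = d) ∨ (c + i * α + j * β = 1 ∧ (i, j) ∈ S) ∨
            ((c + i * α + j * β = -1 ∨ c + i * α + j * β = 2) ∧ (i, j) ∉ S) := by
    decide
  obtain ⟨c, -, α, -, β, -, d, h⟩ := this S
  exact ⟨c, α, β, d, h⟩

theorem mem_QGS_iff_of_ne_zero {p n : ℕ} [NeZero p] {M : Fin n → Matrix (Fin n) (Fin n) (ZMod p)}
    {x : Fin n → ZMod p} {i : Fin n} (hlt : ∀ j < i, x ⬝ᵥ M j *ᵥ x = 0)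
    (hi : x ⬝ᵥ M i *ᵥ x ≠ 0) : x ∈ QGS p n M ↔ x ⬝ᵥ M i *ᵥ x = 1 := by
  refine ⟨fun ⟨k, hk, hk1⟩ => ?_, fun h => ⟨i, hlt, h⟩⟩
  rcases lt_trichotomy k i with hki | rfl | hik
  · have h01 : (0 : ZMod p) = 1 := (hlt k hki).symm.trans hk1
    exact absurd (by rw [← mul_one (x ⬝ᵥ M i *ᵥ x), ← h01, mul_zero]) hi
  · exact hk1
  · exact absurd (hk i hik) hi

theorem IsGridFrame.exists_shattering_translate {p m : ℕ} [Fact p.Prime]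
    {M : Fin (m + 2) → Matrix (Fin (m + 2)) (Fin (m + 2)) (ZMod p)} {a b u v : Fin (m + 2) → ZMod p}
    (hF : IsGridFrame (M 0) (M 1) a b u v) (h₀ : (M 0).IsSymm) (h₁ : (M 1).IsSymm)
    (h2 : (2 : ZMod p) ≠ 0) (S : Finset (Fin 2 × Fin 2)) :
    ∃ z, ∀ i j : Fin 2, ((i : ℕ) : ZMod p) • a + ((j : ℕ) : ZMod p) • b + z ∈ QGS p (m + 2) M ↔
      (i, j) ∈ S := by
  obtain ⟨c, α, β, d, hcell⟩ := exists_grid_values S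
  obtain ⟨z, hzc, hza, hzb, hzd⟩ := hF.exists_translate h₀ h₁ h2 c (α / 2) (β / 2)
    (if d ∈ S then 1 else -1) (d.1 : ℕ) (d.2 : ℕ)
  refine ⟨z, fun i j => ?_⟩
  set x := ((i : ℕ) : ZMod p) • a + ((j : ℕ) : ZMod p) • b + z
  have hval : x ⬝ᵥ M 0 *ᵥ x = ((c + i * α + j * β : ℤ) : ZMod p) := by
    rw [h₀.smul_add_smul_add_dotProduct_mulVec hF.isotropic_a hF.isotropic_b hF.orthogonal_a_b,
      hzc, hza, hzb]
    push_cast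
    field_simp
  have hneg : (-1 : ZMod p) ≠ 1 := fun h => h2 (by linear_combination -h)
  have hlt0 : ∀ k < (0 : Fin (m + 2)), x ⬝ᵥ M k *ᵥ x = 0 :=
    fun k hk => absurd hk (Fin.not_lt_zero k)
  rcases hcell i j with ⟨hm, rfl⟩ | ⟨hm, hS⟩ | ⟨hm, hS⟩
  · have hne : (if (i, j) ∈ S then 1 else -1 : ZMod p) ≠ 0 := by split_ifs <;> simp
    rw [mem_QGS_iff_of_ne_zero (i := 1) ?_ (hzd ▸ hne), hzd]
    · split_ifs with hS <;> simp [hS, hneg]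
    · intro k hk
      rw [(Fin.lt_one_iff k).mp hk, hval, hm, Int.cast_zero]
  · simp only [hS, iff_true]
    rw [mem_QGS_iff_of_ne_zero (i := 0) hlt0 (by rw [hval, hm]; simp), hval,
      hm, Int.cast_one]
  · have hne : ((c + i * α + j * β : ℤ) : ZMod p) ≠ 0 ∧ ((c + i * α + j * β : ℤ) : ZMod p) ≠ 1 := by
      rcases hm with hm | hm <;> rw [hm] <;> push_cast
      · exact ⟨neg_ne_zero.mpr one_ne_zero, hneg⟩
      · exact ⟨h2, fun h => one_ne_zero (by linear_combination h)⟩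
    simp only [hS, iff_false]
    rw [mem_QGS_iff_of_ne_zero (i := 0) hlt0 (hval ▸ hne.1), hval]
    exact hne.2

theorem qgs_vc2_ge (p n : ℕ) (hp : p.Prime) (hp2 : 2 < p) [NeZero p]
    (hn : 13 ≤ n)
    (M : Fin n → Matrix (Fin n) (Fin n) (ZMod p))
    (hsymm : ∀ i, (M i).IsSymm)
    (hrank : ∀ lam : Fin n → ZMod p, lam ≠ 0 → (∑ i, lam i • M i).rank = n) :
    VC2ge (QGS p n M) 2 := by
  have : Fact p.Prime := ⟨hp⟩
  obtain ⟨m, rfl⟩ : ∃ m, n = m + 2 := ⟨n - 2, by omega⟩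
  have h2 : (2 : ZMod p) ≠ 0 := Ring.two_ne_zero (by rw [ZMod.ringChar_zmod_n]; omega)
  have hpencil : ∀ α β : ZMod p, α ≠ 0 ∨ β ≠ 0 → IsUnit (α • M 0 + β • M 1) :=
    fun α β => isUnit_smul_add_smul_of_forall_rank_eq
      (fun lam hlam => (hrank lam hlam).trans (Fintype.card_fin _).symm) zero_ne_one
  obtain ⟨a, b, u, v, hF⟩ := exists_isGridFrame (hsymm 0) (hsymm 1) hpencil (by simp; omega)
  choose z hz using hF.exists_shattering_translate (hsymm 0) (hsymm 1) h2
  exact ⟨fun i => ((i : ℕ) : ZMod p) • a, fun j => ((j : ℕ) : ZMod p) • b, z, hz⟩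
end
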